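/- arXiv:2504.04269 — 6 statements merged into one kernel-verified Lean document; each statement's English description precedes it below -/
import Mathlib

section
/- Let ζ ∈ (0,1), c > 0 and τ > 0, and set α_j := c/(1+j)^τ for j ∈ ℕ. Then there exists a constant C_ζ ≥ 0 such that Σ_{j=0}^{k} ζ^{k−j} α_j ≤ C_ζ α_k for every k ∈ ℕ. -/
set_option maxHeartbeats 1000000


/-- for `ζ ∈ (0,1)`, `c > 0`, `τ > 0` and `α_j := c/(1+j)^τ`, there is a
constant `C_ζ ≥ 0` such that `∑_{j=0}^{k} ζ^{k-j} α_j ≤ C_ζ α_k` for every `k`. -/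
theorem geometric_convolution_bound (ζ c τ : ℝ)
    (hζ : ζ ∈ Set.Ioo (0 : ℝ) 1) (hc : 0 < c) (hτ : 0 < τ) :
    ∃ Cζ : ℝ, 0 ≤ Cζ ∧ ∀ k : ℕ,
      ∑ j ∈ Finset.range (k + 1), ζ ^ (k - j) * (c / (1 + j : ℝ) ^ τ)
        ≤ Cζ * (c / (1 + k : ℝ) ^ τ) := by
  obtain ⟨hζ0, hζ1⟩ := hζ
  set N := ⌈τ⌉₊ with hN
  have hτN : τ ≤ (N : ℝ) := Nat.le_ceil τ
  have hsum : Summable (fun m : ℕ => ((m : ℝ) + 1) ^ N * ζ ^ m) := by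
    have h1 : Summable (fun n : ℕ => (n : ℝ) ^ N * ζ ^ n) :=
      summable_pow_mul_geometric_of_norm_lt_one N
        (by rw [Real.norm_eq_abs, abs_of_pos hζ0]; exact hζ1)
    have h2 : Summable (fun m : ℕ => ((m + 1 : ℕ) : ℝ) ^ N * ζ ^ (m + 1)) :=
      (summable_nat_add_iff 1).mpr h1
    have h3 := h2.mul_left ζ⁻¹
    refine h3.congr fun m => ?_
    have hζne : ζ ≠ 0 := ne_of_gt hζ0
    push_cast
    field_simp
    ring
  set Cζ := ∑' m : ℕ, ((m : ℝ) + 1) ^ N * ζ ^ m with hC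
  have hCnn : 0 ≤ Cζ := tsum_nonneg fun m => by positivity
  refine ⟨Cζ, hCnn, fun k => ?_⟩
  have hk1 : (0:ℝ) < (1 + k : ℝ) := by positivity
  have hak : 0 ≤ c / (1 + k : ℝ) ^ τ := by positivity
  have hterm : ∀ j ∈ Finset.range (k+1),
      ζ ^ (k - j) * (c / (1 + j : ℝ) ^ τ)
        ≤ ((((k - j : ℕ) : ℝ) + 1) ^ N * ζ ^ (k - j)) * (c / (1 + k : ℝ) ^ τ) := by
    intro j hj
    have hjk : j ≤ k := Nat.lt_succ_iff.mp (Finset.mem_range.mp hj)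
    have hj1 : (0:ℝ) < (1 + j : ℝ) := by positivity
    have hle : (1 + k : ℝ) ≤ (((k - j : ℕ) : ℝ) + 1) * (1 + j) := by
      have h : (1 + k : ℕ) ≤ ((k - j) + 1) * (1 + j) := by
        nlinarith [Nat.sub_add_cancel hjk]
      exact_mod_cast h
    have h1 : (1 + k : ℝ) ^ τ ≤ ((((k - j : ℕ) : ℝ) + 1) * (1 + j)) ^ τ :=
      Real.rpow_le_rpow hk1.le hle hτ.le
    have h2 : ((((k - j : ℕ) : ℝ) + 1) * (1 + j : ℝ)) ^ τ
        = (((k - j : ℕ) : ℝ) + 1) ^ τ * (1 + j : ℝ) ^ τ :=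
      Real.mul_rpow (by positivity) hj1.le
    have h3 : (((k - j : ℕ) : ℝ) + 1) ^ τ ≤ (((k - j : ℕ) : ℝ) + 1) ^ (N : ℝ) :=
      Real.rpow_le_rpow_of_exponent_le (by have h0 : (0:ℝ) ≤ ((k - j : ℕ) : ℝ) := Nat.cast_nonneg _; linarith) hτN
    have h4 : (((k - j : ℕ) : ℝ) + 1) ^ (N : ℝ) = (((k - j : ℕ) : ℝ) + 1) ^ N :=
      Real.rpow_natCast _ N
    have hkey : (1 + k : ℝ) ^ τ ≤ (((k - j : ℕ) : ℝ) + 1) ^ N * (1 + j : ℝ) ^ τ := by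
      calc (1 + k : ℝ) ^ τ ≤ (((k - j : ℕ) : ℝ) + 1) ^ τ * (1 + j : ℝ) ^ τ := by
            rw [← h2]; exact h1
        _ ≤ (((k - j : ℕ) : ℝ) + 1) ^ N * (1 + j : ℝ) ^ τ := by
            have : (0:ℝ) ≤ (1 + j : ℝ) ^ τ := by positivity
            nlinarith [h3, h4]
    have hjτ : (0:ℝ) < (1 + j : ℝ) ^ τ := Real.rpow_pos_of_pos hj1 τ
    have hkτ : (0:ℝ) < (1 + k : ℝ) ^ τ := Real.rpow_pos_of_pos hk1 τ
    have h5 : c / (1 + j : ℝ) ^ τ ≤ ((((k - j : ℕ) : ℝ) + 1) ^ N * c) / (1 + k : ℝ) ^ τ := by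
      rw [div_le_div_iff₀ hjτ hkτ]
      nlinarith [mul_le_mul_of_nonneg_left hkey hc.le]
    have hαj : c / (1 + j : ℝ) ^ τ ≤ (((k - j : ℕ) : ℝ) + 1) ^ N * (c / (1 + k : ℝ) ^ τ) := by
      rw [← mul_div_assoc]; exact h5
    have hζpow : (0:ℝ) ≤ ζ ^ (k - j) := by positivity
    calc ζ ^ (k - j) * (c / (1 + j : ℝ) ^ τ)
        ≤ ζ ^ (k - j) * ((((k - j : ℕ) : ℝ) + 1) ^ N * (c / (1 + k : ℝ) ^ τ)) :=
          mul_le_mul_of_nonneg_left hαj hζpow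
      _ = ((((k - j : ℕ) : ℝ) + 1) ^ N * ζ ^ (k - j)) * (c / (1 + k : ℝ) ^ τ) := by ring
  calc ∑ j ∈ Finset.range (k + 1), ζ ^ (k - j) * (c / (1 + j : ℝ) ^ τ)
      ≤ ∑ j ∈ Finset.range (k + 1),
          ((((k - j : ℕ) : ℝ) + 1) ^ N * ζ ^ (k - j)) * (c / (1 + k : ℝ) ^ τ) :=
        Finset.sum_le_sum hterm
    _ = (∑ j ∈ Finset.range (k + 1), (((k - j : ℕ) : ℝ) + 1) ^ N * ζ ^ (k - j))
          * (c / (1 + k : ℝ) ^ τ) := by rw [Finset.sum_mul]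
    _ = (∑ m ∈ Finset.range (k + 1), (((m : ℕ) : ℝ) + 1) ^ N * ζ ^ m)
          * (c / (1 + k : ℝ) ^ τ) := by
        rw [← Finset.sum_range_reflect (fun m => (((m : ℕ) : ℝ) + 1) ^ N * ζ ^ m) (k+1)]
        simp
    _ ≤ Cζ * (c / (1 + k : ℝ) ^ τ) := by
        refine mul_le_mul_of_nonneg_right ?_ hak
        exact Summable.sum_le_tsum (Finset.range (k+1)) (fun m _ => by positivity) hsum
end

section
/- Let W be a mixing matrix, n ≥ 1, Ŵ := W ⊗ I_n, A_m := (1/m)(1_m 1_mᵀ) ⊗ I_n, and ζ := max(|λ2(W)|, |λm(W)|). Let C_W ≥ 0 satisfy ‖Ŵ^j − A_m‖ ≤ C_W ζ^j for all j ∈ ℕ, let {α_max^{(k)}} be a positive sequence, and let C_ζ ≥ 0 satisfy Σ_{j=0}^{k} ζ^{k−j} α_max^{(j)} ≤ C_ζ α_max^{(k)} for all k ∈ ℕ. Suppose the sequence x^{(k)} ∈ ℝ^{mn} satisfies x^{(k+1)} = Ŵ x^{(k)} + p^{(k)}, where p^{(k)} = (p_1^{(k)},…,p_m^{(k)}) with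 each block p_i^{(k)} ∈ ℝⁿ either equal to 0 or of the form α_i^{(k)} d_i^{(k)} with ‖d_i^{(k)}‖ = 1 and 0 < α_i^{(k)} ≤ α_max^{(k)}. Then for every k ≥ 1, ‖x^{(k)} − A_m x^{(k)}‖ ≤ √m · C_W ( ‖x^{(0)}‖ ζ^k + C_ζ α_max^{(k−1)} ). -/
open scoped Kronecker

/-- The eigenvalues of a symmetric real matrix, sorted in nondecreasing order
(with multiplicities). -/
noncomputable def sortedEigs {m : ℕ} (W : Matrix (Fin m) (Fin m) ℝ) (hW : W.IsHermitian) :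
    List ℝ :=
  (Finset.univ.val.map hW.eigenvalues).sort (· ≤ ·)

/-- `W` is a mixing matrix: symmetric (expressed via the `IsHermitian` argument),
nonnegative entries with `W 1 = 1`, eigenvalues `λ₁ = 1`, `λ₂ < 1`, `-1 < λ_m ≤ 0`.
Since `sortedEigs` is nondecreasing, `λ₁` is entry `m-1`, `λ₂` entry `m-2`, `λ_m` entry `0`. -/
def IsMixingMatrix {m : ℕ} (W : Matrix (Fin m) (Fin m) ℝ) (hW : W.IsHermitian) : Prop :=
  (∀ i j, 0 ≤ W i j) ∧
  (W.mulVec (fun _ => (1 : ℝ)) = fun _ => (1 : ℝ)) ∧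
  (sortedEigs W hW).getD (m - 1) 0 = 1 ∧
  (sortedEigs W hW).getD (m - 2) 0 < 1 ∧
  (-1 < (sortedEigs W hW).getD 0 0 ∧ (sortedEigs W hW).getD 0 0 ≤ 0)

/-- `ζ := max (|λ₂(W)|, |λ_m(W)|)`, the spectral mixing constant. -/
noncomputable def mixZeta {m : ℕ} (W : Matrix (Fin m) (Fin m) ℝ) (hW : W.IsHermitian) : ℝ :=
  max |(sortedEigs W hW).getD (m - 2) 0| |(sortedEigs W hW).getD 0 0|

set_option maxHeartbeats 1000000
/-- consensus-error bound for iterates `x^{(k+1)} = Ŵ x^{(k)} + p^{(k)}`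
whose blocks are zero or unit directions scaled by stepsizes bounded by `α_max^{(k)}`:
`‖x^{(k)} - A_m x^{(k)}‖ ≤ √m C_W (‖x⁰‖ ζ^k + C_ζ α_max^{(k-1)})` for all `k ≥ 1`. -/
theorem consensus_error_bound {m n : ℕ} (hm : 2 ≤ m) (hn : 1 ≤ n)
    (W : Matrix (Fin m) (Fin m) ℝ) (hW : W.IsHermitian)
    (hmix : IsMixingMatrix W hW)
    (CW : ℝ) (hCW : 0 ≤ CW)
    (hCWbound : ∀ j : ℕ,
      ‖Matrix.toEuclideanCLM (𝕜 := ℝ)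
          ((W ⊗ₖ (1 : Matrix (Fin n) (Fin n) ℝ)) ^ j
            - (Matrix.of fun _ _ : Fin m => (1 : ℝ) / m) ⊗ₖ (1 : Matrix (Fin n) (Fin n) ℝ))‖
        ≤ CW * mixZeta W hW ^ j)
    (αmax : ℕ → ℝ) (hαmaxpos : ∀ k, 0 < αmax k)
    (Cζ : ℝ) (hCζ : 0 ≤ Cζ)
    (hconv : ∀ k : ℕ,
      ∑ j ∈ Finset.range (k + 1), mixZeta W hW ^ (k - j) * αmax j ≤ Cζ * αmax k)
    (x p : ℕ → EuclideanSpace ℝ (Fin m × Fin n))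
    (hrec : ∀ k, x (k + 1)
      = Matrix.toEuclideanCLM (𝕜 := ℝ) (W ⊗ₖ (1 : Matrix (Fin n) (Fin n) ℝ)) (x k) + p k)
    (hblocks : ∀ k, ∀ i : Fin m,
      (∀ j : Fin n, p k (i, j) = 0) ∨
      ∃ (a : ℝ) (d : EuclideanSpace ℝ (Fin n)), 0 < a ∧ a ≤ αmax k ∧ ‖d‖ = 1 ∧
        ∀ j : Fin n, p k (i, j) = a * d j) :
    ∀ k : ℕ, 1 ≤ k →
      ‖x k - Matrix.toEuclideanCLM (𝕜 := ℝ)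
          ((Matrix.of fun _ _ : Fin m => (1 : ℝ) / m) ⊗ₖ (1 : Matrix (Fin n) (Fin n) ℝ))
          (x k)‖
        ≤ Real.sqrt m * CW * (‖x 0‖ * mixZeta W hW ^ k + Cζ * αmax (k - 1)) := by

  classical
  have hζ0 : 0 ≤ mixZeta W hW := le_trans (abs_nonneg _) (le_max_left _ _)
  have hm0 : (0:ℝ) < (m:ℝ) := by positivity
  set ζ := mixZeta W hW with hζdef
  set J : Matrix (Fin m) (Fin m) ℝ := Matrix.of fun _ _ => (1:ℝ)/m with hJdef
  set Wh : Matrix (Fin m × Fin n) (Fin m × Fin n) ℝ := W ⊗ₖ (1 : Matrix (Fin n) (Fin n) ℝ)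
    with hWhdef
  set Ah : Matrix (Fin m × Fin n) (Fin m × Fin n) ℝ := J ⊗ₖ (1 : Matrix (Fin n) (Fin n) ℝ)
    with hAhdef
  set T := Matrix.toEuclideanCLM (𝕜 := ℝ) (n := Fin m × Fin n) with hTdef
  have hrow : ∀ i, ∑ j, W i j = 1 := by
    intro i
    have h := congrFun hmix.2.1 i
    simpa [Matrix.mulVec, dotProduct] using h
  have hsymm : ∀ i j, W i j = W j i := by
    intro i j
    have h := congrFun (congrFun hW j) i
    simpa [Matrix.conjTranspose_apply] using h
  have hJW : J * W = J := by
    ext i j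
    rw [Matrix.mul_apply]
    have hc : ∑ k, W k j = 1 := by
      rw [Finset.sum_congr rfl fun k _ => hsymm k j]
      exact hrow j
    simp only [hJdef, Matrix.of_apply]
    rw [← Finset.mul_sum, hc, mul_one]
  have hWJ : W * J = J := by
    ext i j
    rw [Matrix.mul_apply]
    simp only [hJdef, Matrix.of_apply]
    rw [← Finset.sum_mul, hrow, one_mul]
  have hAW : Ah * Wh = Ah := by
    rw [hAhdef, hWhdef, ← Matrix.mul_kronecker_mul, hJW, one_mul]
  have hWA : Wh * Ah = Ah := by
    rw [hAhdef, hWhdef, ← Matrix.mul_kronecker_mul, hWJ, one_mul]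
  -- structural identity
  have key : ∀ k, x k - T Ah (x k)
      = T (Wh ^ k - Ah) (x 0)
        + ∑ j ∈ Finset.range k, T (Wh ^ (k - 1 - j) - Ah) (p j) := by
    intro k
    induction k with
    | zero => simp [map_sub, map_one]
    | succ k ih =>
      have hxk : x (k + 1) = T Wh (x k) + p k := hrec k
      have hTAW : ∀ v, T Ah (T Wh v) = T Ah v := by
        intro v
        rw [← ContinuousLinearMap.mul_apply, ← map_mul, hAW]
      calc x (k + 1) - T Ah (x (k + 1))
          = T Wh (x k) + p k - (T Ah (T Wh (x k)) + T Ah (p k)) := by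
            rw [hxk, map_add]
        _ = T Wh (x k - T Ah (x k)) + (p k - T Ah (p k)) := by
            rw [hTAW]
            have : T Wh (T Ah (x k)) = T Ah (x k) := by
              rw [← ContinuousLinearMap.mul_apply, ← map_mul, hWA]
            rw [map_sub, this]; abel
        _ = T (Wh ^ (k+1) - Ah) (x 0)
            + ∑ j ∈ Finset.range (k+1), T (Wh ^ (k + 1 - 1 - j) - Ah) (p j) := by
            simp only [Nat.add_sub_cancel]
            rw [ih, map_add, Finset.sum_range_succ, map_sum]
            have h1 : T Wh (T (Wh ^ k - Ah) (x 0)) = T (Wh ^ (k+1) - Ah) (x 0) := by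
              rw [← ContinuousLinearMap.mul_apply, ← map_mul, mul_sub, hWA, ← pow_succ']
            have h2 : ∀ j ∈ Finset.range k,
                T Wh (T (Wh ^ (k - 1 - j) - Ah) (p j))
                  = T (Wh ^ (k - j) - Ah) (p j) := by
              intro j hj
              rw [Finset.mem_range] at hj
              rw [← ContinuousLinearMap.mul_apply, ← map_mul, mul_sub, hWA, ← pow_succ',
                show k - 1 - j + 1 = k - j from by omega]
            have h3 : T (Wh ^ (k - k) - Ah) (p k) = p k - T Ah (p k) := by
              rw [Nat.sub_self, pow_zero, map_sub, map_one]
              simp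
            rw [Finset.sum_congr rfl h2, h1, h3]
            abel
  -- norm of p
  have hpk : ∀ k, ‖p k‖ ≤ Real.sqrt m * αmax k := by
    intro k
    have hsum : ∑ ij : Fin m × Fin n, ‖p k ij‖ ^ 2 ≤ (m:ℝ) * αmax k ^ 2 := by
      rw [Fintype.sum_prod_type]
      calc ∑ i : Fin m, ∑ j : Fin n, ‖p k (i, j)‖ ^ 2
          ≤ ∑ i : Fin m, αmax k ^ 2 := by
            apply Finset.sum_le_sum
            intro i _
            rcases hblocks k i with h0 | ⟨a, d, ha0, haα, hd1, hpd⟩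
            · have : ∑ j : Fin n, ‖p k (i, j)‖ ^ 2 = 0 := by simp [h0]
              rw [this]
              positivity
            · have : ∑ j : Fin n, ‖p k (i, j)‖ ^ 2 = a ^ 2 * ∑ j : Fin n, ‖d j‖ ^ 2 := by
                rw [Finset.mul_sum]
                refine Finset.sum_congr rfl fun j _ => ?_
                rw [hpd j, norm_mul, mul_pow, Real.norm_eq_abs, sq_abs]
              rw [this]
              have hd2 : ∑ j : Fin n, ‖d j‖ ^ 2 = 1 := by
                have := EuclideanSpace.norm_eq d
                rw [hd1] at this
                have h4 : (0:ℝ) ≤ ∑ j : Fin n, ‖d j‖ ^ 2 := by positivity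
                nlinarith [Real.sq_sqrt h4, this.symm]
              rw [hd2, mul_one]
              have := (hαmaxpos k).le
              nlinarith
        _ = (m:ℝ) * αmax k ^ 2 := by simp [mul_comm]
    have h1 : ‖p k‖ = Real.sqrt (∑ ij : Fin m × Fin n, ‖p k ij‖ ^ 2) :=
      EuclideanSpace.norm_eq (p k)
    rw [h1]
    have h2 : Real.sqrt ((m:ℝ) * αmax k ^ 2) = Real.sqrt m * αmax k := by
      rw [Real.sqrt_mul (le_of_lt hm0), Real.sqrt_sq (hαmaxpos k).le]
    rw [← h2]
    exact Real.sqrt_le_sqrt hsum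
  intro k hk
  have hkey := key k
  have hζpow : ∀ j : ℕ, (0:ℝ) ≤ ζ ^ j := fun j => pow_nonneg hζ0 j
  have hbound : ‖x k - T Ah (x k)‖
      ≤ CW * ζ ^ k * ‖x 0‖ + ∑ j ∈ Finset.range k, CW * ζ ^ (k - 1 - j) * (Real.sqrt m * αmax j) := by
    rw [hkey]
    refine le_trans (norm_add_le _ _) (add_le_add ?_ ?_)
    · exact le_trans (ContinuousLinearMap.le_opNorm _ _)
        (mul_le_mul_of_nonneg_right (hCWbound k) (norm_nonneg _))
    · refine le_trans (norm_sum_le _ _) (Finset.sum_le_sum fun j hj => ?_)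
      refine le_trans (ContinuousLinearMap.le_opNorm _ _) ?_
      exact mul_le_mul (hCWbound (k - 1 - j)) (hpk j) (norm_nonneg _)
        (mul_nonneg hCW (hζpow _))
  have hsum2 : ∑ j ∈ Finset.range k, CW * ζ ^ (k - 1 - j) * (Real.sqrt m * αmax j)
      ≤ Real.sqrt m * CW * (Cζ * αmax (k - 1)) := by
    have hk1 : k - 1 + 1 = k := Nat.succ_pred_eq_of_pos hk
    have h := hconv (k - 1)
    rw [hk1] at h
    calc ∑ j ∈ Finset.range k, CW * ζ ^ (k - 1 - j) * (Real.sqrt m * αmax j)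
        = Real.sqrt m * CW * ∑ j ∈ Finset.range k, ζ ^ (k - 1 - j) * αmax j := by
          rw [Finset.mul_sum]; refine Finset.sum_congr rfl fun j _ => by ring
      _ ≤ Real.sqrt m * CW * (Cζ * αmax (k - 1)) := by
          exact mul_le_mul_of_nonneg_left h (mul_nonneg (Real.sqrt_nonneg m) hCW)
  have hsqrt1 : (1:ℝ) ≤ Real.sqrt m := by
    rw [show (1:ℝ) = Real.sqrt 1 by simp]
    exact Real.sqrt_le_sqrt (by exact_mod_cast le_trans one_le_two hm)
  calc ‖x k - T Ah (x k)‖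
      ≤ CW * ζ ^ k * ‖x 0‖ + Real.sqrt m * CW * (Cζ * αmax (k - 1)) :=
        le_trans hbound (by linarith [hsum2])
    _ ≤ Real.sqrt m * CW * (‖x 0‖ * ζ ^ k + Cζ * αmax (k - 1)) := by
        have h1 : CW * ζ ^ k * ‖x 0‖ ≤ Real.sqrt m * CW * (‖x 0‖ * ζ ^ k) := by
          have : CW * ζ ^ k * ‖x 0‖ = 1 * (CW * (‖x 0‖ * ζ ^ k)) := by ring
          rw [this]
          have h2 : Real.sqrt m * CW * (‖x 0‖ * ζ ^ k) = Real.sqrt m * (CW * (‖x 0‖ * ζ ^ k)) := by ring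
          rw [h2]
          exact mul_le_mul_of_nonneg_right hsqrt1
            (mul_nonneg hCW (mul_nonneg (norm_nonneg _) (hζpow k)))
        linarith
end

section
/- Let W be a mixing matrix, n ≥ 1, Ŵ := W ⊗ I_n, A_m := (1/m)(1_m 1_mᵀ) ⊗ I_n, and ζ := max(|λ2(W)|, |λm(W)|) (so ζ ∈ [0,1)). Let C_W ≥ 0 satisfy ‖Ŵ^j − A_m‖ ≤ C_W ζ^j for all j ∈ ℕ, let {α_max^{(k)}} be a positive sequence with α_max^{(k)} → 0, and let C_ζ ≥ 0 satisfy Σ_{j=0}^{k} ζ^{k−j} α_max^{(j)} ≤ C_ζ α_max^{(k)} for all k ∈ ℕ. Suppose x^{(k+1)} = Ŵ x^{(k)} + p^{(k)} for all k, where p^{(k)} = (p_1^{(k)},…,p_m^{(k)}) with each block p_i^{(k)} ∈ ℝⁿ either equal to 0 or of the form α_i^{(k)} d_i^{(k)} with ‖d_i^{(k)}‖ = 1 and 0 < α_i^{(k)} ≤ α_max^{(k)}. Then lim_{k→∞} ‖x^{(k)} − Ŵ x^{(k)}‖ = 0, i.e., the iterates reach asymptotic consensus. -/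
open scoped Kronecker
open Filter

/-- asymptotic consensus. Under the hypotheses of the consensus-error bound
and `α_max^{(k)} → 0`, the iterates `x^{(k+1)} = Ŵ x^{(k)} + p^{(k)}` satisfy
`‖x^{(k)} - Ŵ x^{(k)}‖ → 0`. -/
theorem asymptotic_consensus {m n : ℕ} (hm : 2 ≤ m) (hn : 1 ≤ n)
    (W : Matrix (Fin m) (Fin m) ℝ) (hW : W.IsHermitian)
    (hmix : IsMixingMatrix W hW)
    (CW : ℝ) (hCW : 0 ≤ CW)
    (hCWbound : ∀ j : ℕ,
      ‖Matrix.toEuclideanCLM (𝕜 := ℝ)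
          ((W ⊗ₖ (1 : Matrix (Fin n) (Fin n) ℝ)) ^ j
            - (Matrix.of fun _ _ : Fin m => (1 : ℝ) / m) ⊗ₖ (1 : Matrix (Fin n) (Fin n) ℝ))‖
        ≤ CW * mixZeta W hW ^ j)
    (αmax : ℕ → ℝ) (hαmaxpos : ∀ k, 0 < αmax k)
    (hαmax0 : Tendsto αmax atTop (nhds 0))
    (Cζ : ℝ) (hCζ : 0 ≤ Cζ)
    (hconv : ∀ k : ℕ,
      ∑ j ∈ Finset.range (k + 1), mixZeta W hW ^ (k - j) * αmax j ≤ Cζ * αmax k)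
    (x p : ℕ → EuclideanSpace ℝ (Fin m × Fin n))
    (hrec : ∀ k, x (k + 1)
      = Matrix.toEuclideanCLM (𝕜 := ℝ) (W ⊗ₖ (1 : Matrix (Fin n) (Fin n) ℝ)) (x k) + p k)
    (hblocks : ∀ k, ∀ i : Fin m,
      (∀ j : Fin n, p k (i, j) = 0) ∨
      ∃ (a : ℝ) (d : EuclideanSpace ℝ (Fin n)), 0 < a ∧ a ≤ αmax k ∧ ‖d‖ = 1 ∧
        ∀ j : Fin n, p k (i, j) = a * d j) :
    Tendsto (fun k =>
        ‖x k - Matrix.toEuclideanCLM (𝕜 := ℝ)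
            (W ⊗ₖ (1 : Matrix (Fin n) (Fin n) ℝ)) (x k)‖)
      atTop (nhds 0) := by
  classical
  set ζ := mixZeta W hW with hζdef
  have hζ0 : 0 ≤ ζ := le_trans (abs_nonneg _) (le_max_left _ _)
  have hm0 : (m : ℝ) ≠ 0 := Nat.cast_ne_zero.mpr (by omega)
  set K : Matrix (Fin m × Fin n) (Fin m × Fin n) ℝ :=
    W ⊗ₖ (1 : Matrix (Fin n) (Fin n) ℝ) with hKdef
  set J : Matrix (Fin m) (Fin m) ℝ := Matrix.of fun _ _ : Fin m => (1 : ℝ) / m with hJdef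
  set B : Matrix (Fin m × Fin n) (Fin m × Fin n) ℝ :=
    J ⊗ₖ (1 : Matrix (Fin n) (Fin n) ℝ) with hBdef
  -- row and column sums of W
  have hsym : ∀ i j, W i j = W j i := by
    intro i j
    have := congrFun (congrFun hW i) j
    simpa [Matrix.conjTranspose_apply] using this.symm
  have hrowsum : ∀ i, ∑ j, W i j = 1 := by
    intro i
    have := congrFun hmix.2.1 i
    simpa [Matrix.mulVec, dotProduct] using this
  have hcolsum : ∀ j, ∑ i, W i j = 1 := by
    intro j
    calc ∑ i, W i j = ∑ i, W j i := by simp_rw [hsym]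
    _ = 1 := hrowsum j
  have hJW : J * W = J := by
    ext i j
    simp only [Matrix.mul_apply, hJdef, Matrix.of_apply]
    rw [← Finset.mul_sum, hcolsum, mul_one]
  have hWJ : W * J = J := by
    ext i j
    simp only [Matrix.mul_apply, hJdef, Matrix.of_apply]
    rw [← Finset.sum_mul, hrowsum, one_mul]
  have hBK : B * K = B := by
    rw [hBdef, hKdef, ← Matrix.mul_kronecker_mul, hJW, Matrix.one_mul]
  have hKB : K * B = B := by
    rw [hBdef, hKdef, ← Matrix.mul_kronecker_mul, hWJ, Matrix.one_mul]
  have hBKpow : ∀ j : ℕ, B * K ^ j = B := by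
    intro j
    induction j with
    | zero => simp
    | succ j ih => rw [pow_succ, ← mul_assoc, ih, hBK]
  set T := Matrix.toEuclideanCLM (𝕜 := ℝ) K with hTdef
  set A := Matrix.toEuclideanCLM (𝕜 := ℝ) B with hAdef
  have hATj : ∀ j : ℕ, A * T ^ j = A := by
    intro j
    rw [hAdef, hTdef, ← map_pow, ← map_mul, hBKpow]
  have hTA : T * A = A := by rw [hAdef, hTdef, ← map_mul, hKB]
  have hATapp : ∀ (j : ℕ) (v : EuclideanSpace ℝ (Fin m × Fin n)), A ((T ^ j) v) = A v := by
    intro j v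
    simpa [ContinuousLinearMap.mul_apply] using DFunLike.congr_fun (hATj j) v
  have hopj : ∀ j : ℕ, ‖T ^ j - A‖ ≤ CW * ζ ^ j := by
    intro j
    have h := hCWbound j
    rwa [map_sub, map_pow] at h
  have hApply : ∀ (j : ℕ) (v : EuclideanSpace ℝ (Fin m × Fin n)),
      ‖(T ^ j - A) v‖ ≤ CW * ζ ^ j * ‖v‖ := by
    intro j v
    exact le_trans ((T ^ j - A).le_opNorm v)
      (mul_le_mul_of_nonneg_right (hopj j) (norm_nonneg v))
  -- unrolled recursion
  have hxk : ∀ k : ℕ, x k = (T ^ k) (x 0) + ∑ j ∈ Finset.range k, (T ^ j) (p (k - 1 - j)) := by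
    intro k
    induction k with
    | zero => simp
    | succ k ih =>
      rw [hrec k, ih, map_add, map_sum,
        Finset.sum_range_succ' (fun j => (T ^ j) (p (k + 1 - 1 - j))) k]
      have hsum : (∑ j ∈ Finset.range k, T ((T ^ j) (p (k - 1 - j))))
          = ∑ j ∈ Finset.range k, (T ^ (j + 1)) (p (k + 1 - 1 - (j + 1))) := by
        refine Finset.sum_congr rfl fun j _ => ?_
        have e : k + 1 - 1 - (j + 1) = k - 1 - j := by omega
        rw [e, pow_succ' T j, ContinuousLinearMap.mul_apply]
      rw [hsum, pow_succ' T k, ContinuousLinearMap.mul_apply]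
      have e0 : k + 1 - 1 - 0 = k := by omega
      rw [e0]
      simp only [pow_zero, ContinuousLinearMap.one_apply]
      abel
  -- consensus error formula
  have hz : ∀ k : ℕ, x k - A (x k)
      = (T ^ k - A) (x 0) + ∑ j ∈ Finset.range k, (T ^ j - A) (p (k - 1 - j)) := by
    intro k
    rw [hxk k]
    simp only [map_add, map_sum, hATapp, ContinuousLinearMap.sub_apply,
      Finset.sum_sub_distrib]
    abel
  -- norm bound for the perturbations
  have hp : ∀ k, ‖p k‖ ≤ Real.sqrt m * αmax k := by
    intro k
    have hα := (hαmaxpos k).le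
    have h1 : ∑ q : Fin m × Fin n, ‖p k q‖ ^ 2 ≤ (m : ℝ) * αmax k ^ 2 := by
      rw [Fintype.sum_prod_type]
      calc ∑ i : Fin m, ∑ r : Fin n, ‖p k (i, r)‖ ^ 2
          ≤ ∑ _i : Fin m, αmax k ^ 2 := by
            refine Finset.sum_le_sum fun i _ => ?_
            rcases hblocks k i with h | ⟨a, d, ha0, haα, hd, hpd⟩
            · simp [h]
              positivity
            · have hd2 : ∑ r : Fin n, ‖d r‖ ^ 2 = 1 := by
                have := hd
                rw [EuclideanSpace.norm_eq, Real.sqrt_eq_one] at this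
                exact this
              have : ∑ r : Fin n, ‖p k (i, r)‖ ^ 2 = a ^ 2 := by
                simp only [hpd, Real.norm_eq_abs, abs_mul, mul_pow, sq_abs]
                rw [← Finset.mul_sum]
                have : ∑ r : Fin n, (d r) ^ 2 = 1 := by
                  simpa [Real.norm_eq_abs, sq_abs] using hd2
                rw [this, mul_one]
              rw [this]
              nlinarith
        _ = (m : ℝ) * αmax k ^ 2 := by
            rw [Finset.sum_const, Finset.card_univ, Fintype.card_fin, nsmul_eq_mul]
    calc ‖p k‖ = Real.sqrt (∑ q : Fin m × Fin n, ‖p k q‖ ^ 2) := EuclideanSpace.norm_eq _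
      _ ≤ Real.sqrt ((m : ℝ) * αmax k ^ 2) := Real.sqrt_le_sqrt h1
      _ = Real.sqrt m * αmax k := by
          rw [Real.sqrt_mul (Nat.cast_nonneg m), Real.sqrt_sq hα]
  -- main pointwise bound for k ≥ 1
  set C1 : ℝ := ‖(1 : EuclideanSpace ℝ (Fin m × Fin n) →L[ℝ] EuclideanSpace ℝ (Fin m × Fin n)) - T‖
    with hC1def
  have hC10 : 0 ≤ C1 := norm_nonneg _
  have hbound : ∀ k : ℕ, 1 ≤ k →
      ‖x k - T (x k)‖ ≤ C1 * (CW * ζ ^ k * ‖x 0‖ + CW * Real.sqrt m * (Cζ * αmax (k - 1))) := by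
    intro k hk
    have h1TA : ((1 : EuclideanSpace ℝ (Fin m × Fin n) →L[ℝ] EuclideanSpace ℝ (Fin m × Fin n))
        - T) * A = 0 := by
      rw [sub_mul, one_mul, hTA, sub_self]
    have e1 : x k - T (x k)
        = ((1 : EuclideanSpace ℝ (Fin m × Fin n) →L[ℝ] EuclideanSpace ℝ (Fin m × Fin n)) - T)
            (x k - A (x k)) := by
      rw [map_sub]
      have h0 : ((1 : EuclideanSpace ℝ (Fin m × Fin n) →L[ℝ] EuclideanSpace ℝ (Fin m × Fin n))
          - T) (A (x k)) = 0 := by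
        rw [← ContinuousLinearMap.mul_apply, h1TA]
        simp
      rw [h0, sub_zero]
      simp [ContinuousLinearMap.sub_apply]
    have hzk : ‖x k - A (x k)‖
        ≤ CW * ζ ^ k * ‖x 0‖ + CW * Real.sqrt m * (Cζ * αmax (k - 1)) := by
      rw [hz k]
      refine le_trans (norm_add_le _ _) (add_le_add (hApply k (x 0)) ?_)
      calc ‖∑ j ∈ Finset.range k, (T ^ j - A) (p (k - 1 - j))‖
          ≤ ∑ j ∈ Finset.range k, ‖(T ^ j - A) (p (k - 1 - j))‖ := norm_sum_le _ _
        _ ≤ ∑ j ∈ Finset.range k, CW * ζ ^ j * (Real.sqrt m * αmax (k - 1 - j)) := by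
            refine Finset.sum_le_sum fun j _ => ?_
            refine le_trans (hApply j _) ?_
            exact mul_le_mul_of_nonneg_left (hp _) (by positivity)
        _ = CW * Real.sqrt m * ∑ j ∈ Finset.range k, ζ ^ j * αmax (k - 1 - j) := by
            rw [Finset.mul_sum]
            exact Finset.sum_congr rfl fun j _ => by ring
        _ = CW * Real.sqrt m * ∑ j ∈ Finset.range k, ζ ^ (k - 1 - j) * αmax j := by
            congr 1
            rw [← Finset.sum_range_reflect (fun j => ζ ^ (k - 1 - j) * αmax j) k]
            refine Finset.sum_congr rfl fun j hj => ?_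
            have hjk := Finset.mem_range.mp hj
            have e : k - 1 - (k - 1 - j) = j := by omega
            rw [e]
        _ ≤ CW * Real.sqrt m * (Cζ * αmax (k - 1)) := by
            refine mul_le_mul_of_nonneg_left ?_ (by positivity)
            have := hconv (k - 1)
            have ek : k - 1 + 1 = k := by omega
            rwa [ek] at this
    rw [e1]
    calc ‖((1 : EuclideanSpace ℝ (Fin m × Fin n) →L[ℝ] EuclideanSpace ℝ (Fin m × Fin n)) - T)
          (x k - A (x k))‖ ≤ C1 * ‖x k - A (x k)‖ := ContinuousLinearMap.le_opNorm _ _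
      _ ≤ C1 * (CW * ζ ^ k * ‖x 0‖ + CW * Real.sqrt m * (Cζ * αmax (k - 1))) :=
          mul_le_mul_of_nonneg_left hzk hC10
  -- ζ^k → 0
  have hζpow : Tendsto (fun k => ζ ^ k) atTop (nhds 0) := by
    refine squeeze_zero (fun k => by positivity) (fun k => ?_)
      (by simpa using hαmax0.const_mul (Cζ / αmax 0))
    have hterm : ζ ^ (k - 0) * αmax 0 ≤ ∑ j ∈ Finset.range (k + 1), ζ ^ (k - j) * αmax j :=
      Finset.single_le_sum (f := fun j => ζ ^ (k - j) * αmax j)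
        (fun j _ => mul_nonneg (pow_nonneg hζ0 _) (hαmaxpos j).le) (Finset.mem_range.mpr (by omega))
    have h0 : ζ ^ k * αmax 0 ≤ Cζ * αmax k := by
      simpa using hterm.trans (hconv k)
    rw [div_mul_eq_mul_div, le_div_iff₀ (hαmaxpos 0)]
    linarith
  -- limits
  have h2 : Tendsto (fun k => αmax (k - 1)) atTop (nhds 0) :=
    hαmax0.comp (tendsto_sub_atTop_nat 1)
  have a1 : Tendsto (fun k => CW * ζ ^ k * ‖x 0‖) atTop (nhds 0) := by
    simpa using (hζpow.const_mul CW).mul_const ‖x 0‖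
  have a2 : Tendsto (fun k => CW * Real.sqrt m * (Cζ * αmax (k - 1))) atTop (nhds 0) := by
    simpa using (h2.const_mul Cζ).const_mul (CW * Real.sqrt m)
  have hh : Tendsto (fun k =>
      C1 * (CW * ζ ^ k * ‖x 0‖ + CW * Real.sqrt m * (Cζ * αmax (k - 1)))) atTop (nhds 0) := by
    simpa using (a1.add a2).const_mul C1
  refine tendsto_of_tendsto_of_tendsto_of_le_of_le' tendsto_const_nhds hh
    (Eventually.of_forall fun k => norm_nonneg _) ?_
  exact eventually_atTop.mpr ⟨1, hbound⟩
end

section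
/- For n ≥ 1, the positive spanning set D_⊕ := {e₁,…,e_n, −e₁,…,−e_n} ⊂ ℝⁿ (the coordinate vectors and their negatives) has cosine measure exactly 1/√n; that is, min over nonzero v ∈ ℝⁿ of max over d ∈ D_⊕ of dᵀv/(‖d‖‖v‖) equals 1/√n. -/
open scoped RealInnerProductSpace

/-!
The cosine of `v` against `±eᵢ` is `±vᵢ / ‖v‖`, so the inner maximum is `‖v‖_∞ / ‖v‖`
(the sup norm `‖v.ofLp‖` of the underlying function). Since `‖v‖ ≤ √n ‖v‖_∞`, with equality
at `v = (1, …, 1)`, the minimum over `v` is `1 / √n`.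
-/

/-- The positive spanning set `D_⊕ = {e₁, …, e_n, -e₁, …, -e_n}` consisting of the
canonical basis vectors of `ℝⁿ` and their negatives. -/
def Dplus (n : ℕ) : Set (EuclideanSpace ℝ (Fin n)) :=
  {d | ∃ i : Fin n, d = EuclideanSpace.single i 1 ∨ d = -EuclideanSpace.single i 1}

namespace EuclideanSpace

variable {ι : Type*}

lemma nonempty_of_ne_zero {v : EuclideanSpace ℝ ι} (hv : v ≠ 0) : Nonempty ι := by
  by_contra h
  rw [not_nonempty_iff] at h
  exact hv (Subsingleton.elim _ _)

variable [Fintype ι]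

lemma norm_le_sqrt_card_mul_norm_ofLp (v : EuclideanSpace ℝ ι) :
    ‖v‖ ≤ √(Fintype.card ι) * ‖v.ofLp‖ := by
  calc ‖v‖ = √(∑ i, ‖v i‖ ^ 2) := EuclideanSpace.norm_eq v
    _ ≤ √(∑ _i : ι, ‖v.ofLp‖ ^ 2) := by gcongr with i; exact norm_le_pi_norm v.ofLp i
    _ = √(Fintype.card ι) * ‖v.ofLp‖ := by simp [Real.sqrt_mul]

lemma norm_toLp_const_one [Nonempty ι] :
    ‖WithLp.toLp 2 (fun _ : ι ↦ (1 : ℝ))‖ = √(Fintype.card ι) := by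
  simp [EuclideanSpace.norm_eq]

lemma one_div_sqrt_card_le_norm_ofLp_div_norm {v : EuclideanSpace ℝ ι} (hv : v ≠ 0) :
    1 / √(Fintype.card ι) ≤ ‖v.ofLp‖ / ‖v‖ := by
  have := nonempty_of_ne_zero hv
  rw [div_le_div_iff₀ (by positivity) (norm_pos_iff.mpr hv), one_mul, mul_comm]
  exact norm_le_sqrt_card_mul_norm_ofLp v

end EuclideanSpace

open EuclideanSpace

lemma isGreatest_cosines_Dplus {n : ℕ} {v : EuclideanSpace ℝ (Fin n)} (hv : v ≠ 0) :
    IsGreatest {s : ℝ | ∃ d ∈ Dplus n, s = ⟪d, v⟫ / (‖d‖ * ‖v‖)} (‖v.ofLp‖ / ‖v‖) := by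
  have := nonempty_of_ne_zero hv
  have hcos (i : Fin n) : ⟪single i 1, v⟫ / (‖single i (1 : ℝ)‖ * ‖v‖) = v i / ‖v‖ ∧
      ⟪-single i 1, v⟫ / (‖-single i (1 : ℝ)‖ * ‖v‖) = -v i / ‖v‖ := by
    simp [inner_single_left, neg_div]
  constructor
  · obtain ⟨⟨i, hi⟩, -⟩ := IsGreatest.pi_norm v.ofLp
    simp only [Real.norm_eq_abs] at hi
    rcases abs_cases (v i) with ⟨habs, -⟩ | ⟨habs, -⟩
    · exact ⟨_, ⟨i, Or.inl rfl⟩, by rw [(hcos i).1, ← hi, habs]⟩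
    · exact ⟨_, ⟨i, Or.inr rfl⟩, by rw [(hcos i).2, ← hi, habs]⟩
  · rintro s ⟨d, ⟨i, rfl | rfl⟩, rfl⟩
    · rw [(hcos i).1]
      gcongr
      exact (Real.le_norm_self _).trans (norm_le_pi_norm v.ofLp i)
    · rw [(hcos i).2]
      gcongr
      exact (neg_le_abs _).trans (norm_le_pi_norm v.ofLp i)

/-- the cosine measure of `D_⊕`, i.e. the minimum over nonzero `v ∈ ℝⁿ`
of the maximum over `d ∈ D_⊕` of `⟪d, v⟫/(‖d‖ ‖v‖)`, equals `1/√n`. -/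
theorem cosine_measure_Dplus {n : ℕ} (hn : 1 ≤ n) :
    sInf {r : ℝ | ∃ v : EuclideanSpace ℝ (Fin n), v ≠ 0 ∧
        r = sSup {s : ℝ | ∃ d ∈ Dplus n, s = ⟪d, v⟫ / (‖d‖ * ‖v‖)}}
      = 1 / Real.sqrt n := by
  have : Nonempty (Fin n) := ⟨⟨0, hn⟩⟩
  have hsSup {v : EuclideanSpace ℝ (Fin n)} (hv : v ≠ 0) :
      sSup {s : ℝ | ∃ d ∈ Dplus n, s = ⟪d, v⟫ / (‖d‖ * ‖v‖)} = ‖v.ofLp‖ / ‖v‖ :=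
    (isGreatest_cosines_Dplus hv).csSup_eq
  set ones : EuclideanSpace ℝ (Fin n) := WithLp.toLp 2 fun _ ↦ 1
  have hones : ones ≠ 0 := norm_ne_zero_iff.mp (by rw [norm_toLp_const_one]; positivity)
  refine IsLeast.csInf_eq ⟨⟨ones, hones, ?_⟩, ?_⟩
  · rw [hsSup hones, norm_toLp_const_one, Fintype.card_fin]
    simp [ones]
  · rintro r ⟨v, hv, rfl⟩
    rw [hsSup hv]
    simpa only [Fintype.card_fin] using one_div_sqrt_card_le_norm_ofLp_div_norm hv
end

section
/- Let W be a mixing matrix, γ > 0, f_i: ℝⁿ → ℝ continuously differentiable with L_i-Lipschitz gradient for i = 1,…,m, and set M := max_i (L_i + (1 − w_ii)/γ). Let ρ be a forcing function, and let α_i > 0 for each agent with α_min ≤ α_i ≤ α_max. Let x = (x₁,…,x_m) ∈ ℝ^{nm} and suppose x⁺ = (x₁⁺,…,x_m⁺) is obtained as follows: there is a nonempty set S ⊆ {1,…,m} such that for i ∈ S, x_i⁺ = x_i + α_i d_i for some unit vector d_i with 𝓛_i(x_i + α_i d_i; γ) ≤ 𝓛_i(x_i; γ) − ρ(α_i) (with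 neighbor points x_j, j ≠ i), and x_i⁺ = x_i for i ∉ S. Then 𝓛(x⁺; γ) − 𝓛(x; γ) ≤ −ρ(α_min) + m M α_max². -/
open scoped RealInnerProductSpace
open Filter

section auxLemmas
open scoped RealInnerProductSpace

private lemma swap_erase_sum' {m : ℕ} (g : Fin m → Fin m → ℝ) :
    ∑ i, ∑ j ∈ Finset.univ.erase i, g i j = ∑ i, ∑ j ∈ Finset.univ.erase i, g j i := by
  rw [Finset.sum_comm' (s := Finset.univ) (t := fun i => Finset.univ.erase i)
    (s' := fun j => Finset.univ.erase j) (t' := Finset.univ)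
    (fun a b => by simp [Finset.mem_erase]; exact ne_comm)]

private lemma quad_identity' {m : ℕ} {E : Type*} [NormedAddCommGroup E] [InnerProductSpace ℝ E]
    (W : Matrix (Fin m) (Fin m) ℝ) (hsym : ∀ i j, W i j = W j i)
    (x xp : Fin m → E) :
    (∑ i, (‖xp i‖ ^ 2 - ∑ j, W i j * ⟪xp i, xp j⟫)) -
      ∑ i, (‖x i‖ ^ 2 - ∑ j, W i j * ⟪x i, x j⟫) =
    ((∑ i, ((1 - W i i) * ‖xp i‖ ^ 2 - 2 * ∑ j ∈ Finset.univ.erase i, W i j * ⟪xp i, x j⟫)) -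
      ∑ i, ((1 - W i i) * ‖x i‖ ^ 2 - 2 * ∑ j ∈ Finset.univ.erase i, W i j * ⟪x i, x j⟫)) -
    ∑ i, ∑ j ∈ Finset.univ.erase i, W i j * ⟪xp i - x i, xp j - x j⟫ := by
  have split : ∀ y : Fin m → E, ∀ i : Fin m,
      ∑ j, W i j * ⟪y i, y j⟫ = W i i * ‖y i‖ ^ 2 + ∑ j ∈ Finset.univ.erase i, W i j * ⟪y i, y j⟫ := by
    intro y i
    rw [← Finset.add_sum_erase _ _ (Finset.mem_univ i), real_inner_self_eq_norm_sq]
  have h1 : ∑ i, ∑ j ∈ Finset.univ.erase i, W i j * ⟪xp i, x j⟫ =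
      ∑ i, ∑ j ∈ Finset.univ.erase i, W i j * ⟪x i, xp j⟫ := by
    rw [swap_erase_sum']
    exact Finset.sum_congr rfl fun i _ => Finset.sum_congr rfl fun j _ => by
      rw [hsym j i, real_inner_comm]
  simp only [split, inner_sub_left, inner_sub_right, mul_sub, mul_add, sub_mul, one_mul, two_mul,
    Finset.sum_sub_distrib, Finset.sum_add_distrib, Finset.mul_sum]
  linarith [h1]

end auxLemmas


/-- The local Lyapunov function of agent `i`:
`𝓛_i(x; γ) = f(x) + (1/(2γ)) [(1 - w_ii) ‖x‖² - 2 ∑_{j ≠ i} w_ij ⟪x, x_j⟫]`. -/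
noncomputable def lyapLocal {n m : ℕ} (f : EuclideanSpace ℝ (Fin n) → ℝ) (γ : ℝ)
    (w : Fin m → ℝ) (i : Fin m) (xN : Fin m → EuclideanSpace ℝ (Fin n))
    (x : EuclideanSpace ℝ (Fin n)) : ℝ :=
  f x + (1 / (2 * γ)) *
    ((1 - w i) * ‖x‖ ^ 2 - 2 * ∑ j ∈ Finset.univ.erase i, w j * ⟪x, xN j⟫)

/-- The penalized objective `𝓛(x; γ) = ∑ᵢ fᵢ(xᵢ) + (1/(2γ)) xᵀ(I - W ⊗ Iₙ)x` on `ℝ^{nm}`,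
the quadratic form being written blockwise. -/
noncomputable def lyapGlobal {n m : ℕ} (f : Fin m → EuclideanSpace ℝ (Fin n) → ℝ)
    (W : Matrix (Fin m) (Fin m) ℝ) (γ : ℝ)
    (x : Fin m → EuclideanSpace ℝ (Fin n)) : ℝ :=
  ∑ i, f i (x i) + (1 / (2 * γ)) * ∑ i, (‖x i‖ ^ 2 - ∑ j, W i j * ⟪x i, x j⟫)

/-- one-iteration decrease of the penalized objective for `DDS-L`.
If a nonempty set `S` of agents takes successful unit-direction steps satisfying the
sufficient decrease condition, and the others stay put, then
`𝓛(x⁺; γ) - 𝓛(x; γ) ≤ -ρ(α_min) + m M α_max²` where `M = maxᵢ (Lᵢ + (1 - w_ii)/γ)`. -/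
theorem lyapGlobal_decrease {n m : ℕ} (hm : 2 ≤ m)
    (W : Matrix (Fin m) (Fin m) ℝ) (hW : W.IsHermitian)
    (hmix : IsMixingMatrix W hW)
    (γ : ℝ) (hγ : 0 < γ)
    (f : Fin m → EuclideanSpace ℝ (Fin n) → ℝ) (L : Fin m → ℝ)
    (hf : ∀ i, ContDiff ℝ 1 (f i))
    (hlip : ∀ i x y, ‖gradient (f i) x - gradient (f i) y‖ ≤ L i * ‖x - y‖)
    (M : ℝ) (hM : IsGreatest (Set.range fun i : Fin m => L i + (1 - W i i) / γ) M)
    -- `ρ` is a forcing function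
    (ρ : ℝ → ℝ)
    (hρpos : ∀ a, 0 < a → 0 < ρ a)
    (hρmono : ∀ a b, 0 < a → a ≤ b → ρ a ≤ ρ b)
    (hρratio : ∀ a b, 0 < a → a ≤ b → ρ a / a ≤ ρ b / b)
    (hρsmall : Tendsto (fun a => ρ a / a) (nhdsWithin 0 (Set.Ioi 0)) (nhds 0))
    -- stepsizes
    (α : Fin m → ℝ) (αmin αmax : ℝ)
    (hαminpos : 0 < αmin) (hαpos : ∀ i, 0 < α i)
    (hbounds : ∀ i, αmin ≤ α i ∧ α i ≤ αmax)
    -- the step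
    (x xp : Fin m → EuclideanSpace ℝ (Fin n))
    (S : Finset (Fin m)) (hS : S.Nonempty)
    (hsucc : ∀ i ∈ S, ∃ d : EuclideanSpace ℝ (Fin n), ‖d‖ = 1 ∧
      lyapLocal (f i) γ (W i) i x (x i + α i • d)
        ≤ lyapLocal (f i) γ (W i) i x (x i) - ρ (α i) ∧
      xp i = x i + α i • d)
    (hunsucc : ∀ i ∉ S, xp i = x i) :
    lyapGlobal f W γ xp - lyapGlobal f W γ x ≤ -ρ αmin + m * M * αmax ^ 2 := by
  classical
  obtain ⟨i0, hi0⟩ := hS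
  rcases Nat.eq_zero_or_pos n with hn | hn
  · exfalso
    obtain ⟨d, hd, -, -⟩ := hsucc i0 hi0
    subst hn
    have hd0 : d = 0 := Subsingleton.elim d 0
    rw [hd0] at hd; simp at hd
  have hL : ∀ i, 0 ≤ L i := by
    intro i
    have h := hlip i (EuclideanSpace.single ⟨0, hn⟩ (1:ℝ)) 0
    rw [sub_zero, EuclideanSpace.norm_single] at h
    have := norm_nonneg (gradient (f i) (EuclideanSpace.single ⟨0, hn⟩ (1:ℝ)) - gradient (f i) 0)
    simp at h; linarith
  have hrow : ∀ i, ∑ j, W i j = 1 := by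
    intro i
    have := congrFun hmix.2.1 i
    simpa [Matrix.mulVec, dotProduct] using this
  have herase : ∀ i, ∑ j ∈ Finset.univ.erase i, W i j = 1 - W i i := by
    intro i
    have h := Finset.add_sum_erase Finset.univ (W i) (Finset.mem_univ i)
    have := hrow i; linarith
  have hMub : ∀ i, L i + (1 - W i i) / γ ≤ M := fun i => hM.2 ⟨i, rfl⟩
  have hWle : ∀ i, 1 - W i i ≤ γ * M := by
    intro i
    have h1 := hMub i
    have h2 := hL i
    have h3 : (1 - W i i) / γ ≤ M := by linarith
    calc 1 - W i i = ((1 - W i i) / γ) * γ := by field_simp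
    _ ≤ M * γ := mul_le_mul_of_nonneg_right h3 hγ.le
    _ = γ * M := by ring
  have hWnn : ∀ i, 0 ≤ 1 - W i i := by
    intro i
    have : 0 ≤ ∑ j ∈ Finset.univ.erase i, W i j :=
      Finset.sum_nonneg fun j _ => hmix.1 i j
    linarith [herase i]
  have hM0 : 0 ≤ M := by
    have := hWle i0; have := hWnn i0; nlinarith
  have hαmax : 0 < αmax := lt_of_lt_of_le (hαpos i0) (hbounds i0).2
  have hδ : ∀ i, ‖xp i - x i‖ ≤ αmax := by
    intro i
    by_cases hi : i ∈ S
    · obtain ⟨d, hd, -, hxp⟩ := hsucc i hi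
      rw [hxp, add_sub_cancel_left, norm_smul, hd, mul_one, Real.norm_eq_abs,
        abs_of_pos (hαpos i)]
      exact (hbounds i).2
    · rw [hunsucc i hi, sub_self, norm_zero]; exact hαmax.le
  have hsym : ∀ i j, W i j = W j i := fun i j => by
    have := congrFun (congrFun hW i) j
    simpa using this.symm
  -- key decomposition
  have hq := quad_identity' W hsym x xp
  have hloc : ∑ i, (lyapLocal (f i) γ (W i) i x (xp i) - lyapLocal (f i) γ (W i) i x (x i))
      = (∑ i, f i (xp i) - ∑ i, f i (x i)) + (1 / (2 * γ)) *
        ((∑ i, ((1 - W i i) * ‖xp i‖ ^ 2 - 2 * ∑ j ∈ Finset.univ.erase i, W i j * ⟪xp i, x j⟫)) -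
         ∑ i, ((1 - W i i) * ‖x i‖ ^ 2 - 2 * ∑ j ∈ Finset.univ.erase i, W i j * ⟪x i, x j⟫)) := by
    simp only [lyapLocal]
    rw [Finset.sum_sub_distrib, Finset.sum_add_distrib, Finset.sum_add_distrib,
      ← Finset.mul_sum, ← Finset.mul_sum]
    ring
  have key : lyapGlobal f W γ xp - lyapGlobal f W γ x =
      (∑ i, (lyapLocal (f i) γ (W i) i x (xp i) - lyapLocal (f i) γ (W i) i x (x i)))
      - (1 / (2 * γ)) *
        ∑ i, ∑ j ∈ Finset.univ.erase i, W i j * ⟪xp i - x i, xp j - x j⟫ := by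
    rw [hloc]
    unfold lyapGlobal
    linear_combination (1 / (2 * γ)) * hq
  -- bound the local decrease terms
  have hlocal : ∑ i, (lyapLocal (f i) γ (W i) i x (xp i) - lyapLocal (f i) γ (W i) i x (x i))
      ≤ -ρ αmin := by
    rw [← Finset.sum_subset (Finset.subset_univ S) (fun i _ hi => by rw [hunsucc i hi, sub_self])]
    have hterm : ∀ i ∈ S,
        lyapLocal (f i) γ (W i) i x (xp i) - lyapLocal (f i) γ (W i) i x (x i) ≤ -ρ αmin := by
      intro i hi
      obtain ⟨d, -, hdec, hxp⟩ := hsucc i hi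
      rw [hxp]
      have := hρmono αmin (α i) hαminpos (hbounds i).1
      linarith
    calc ∑ i ∈ S, (lyapLocal (f i) γ (W i) i x (xp i) - lyapLocal (f i) γ (W i) i x (x i))
        ≤ ∑ _i ∈ S, (-ρ αmin) := Finset.sum_le_sum hterm
      _ = (S.card : ℝ) * (-ρ αmin) := by rw [Finset.sum_const, nsmul_eq_mul]
      _ ≤ -ρ αmin := by
          have hc : (1:ℝ) ≤ (S.card : ℝ) := by
            exact_mod_cast Finset.one_le_card.mpr ⟨i0, hi0⟩
          nlinarith [hρpos αmin hαminpos]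
  -- bound the cross term
  have hcb : |∑ i, ∑ j ∈ Finset.univ.erase i, W i j * ⟪xp i - x i, xp j - x j⟫|
      ≤ m * (γ * M) * αmax ^ 2 := by
    calc |∑ i, ∑ j ∈ Finset.univ.erase i, W i j * ⟪xp i - x i, xp j - x j⟫|
        ≤ ∑ i, |∑ j ∈ Finset.univ.erase i, W i j * ⟪xp i - x i, xp j - x j⟫| :=
        Finset.abs_sum_le_sum_abs _ _
      _ ≤ ∑ i, ∑ j ∈ Finset.univ.erase i, W i j * αmax ^ 2 := by
          apply Finset.sum_le_sum
          intro i _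
          refine (Finset.abs_sum_le_sum_abs _ _).trans (Finset.sum_le_sum fun j _ => ?_)
          rw [abs_mul, abs_of_nonneg (hmix.1 i j)]
          apply mul_le_mul_of_nonneg_left _ (hmix.1 i j)
          calc |⟪xp i - x i, xp j - x j⟫| ≤ ‖xp i - x i‖ * ‖xp j - x j‖ :=
              abs_real_inner_le_norm _ _
            _ ≤ αmax * αmax := mul_le_mul (hδ i) (hδ j) (norm_nonneg _) hαmax.le
            _ = αmax ^ 2 := (sq αmax).symm
      _ = ∑ i : Fin m, (1 - W i i) * αmax ^ 2 := by
          refine Finset.sum_congr rfl fun i _ => ?_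
          rw [← Finset.sum_mul, herase i]
      _ ≤ ∑ _i : Fin m, (γ * M) * αmax ^ 2 := by
          apply Finset.sum_le_sum
          intro i _
          exact mul_le_mul_of_nonneg_right (hWle i) (by positivity)
      _ = m * (γ * M) * αmax ^ 2 := by
          rw [Finset.sum_const, Finset.card_univ, Fintype.card_fin, nsmul_eq_mul]; ring
  have hcross : -((1 / (2 * γ)) *
      ∑ i, ∑ j ∈ Finset.univ.erase i, W i j * ⟪xp i - x i, xp j - x j⟫) ≤ m * M * αmax ^ 2 := by
    set C := ∑ i, ∑ j ∈ Finset.univ.erase i, W i j * ⟪xp i - x i, xp j - x j⟫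
    have hcpos : (0:ℝ) < 1 / (2 * γ) := by positivity
    have h1 : (1 / (2 * γ)) * |C| ≤ (1 / (2 * γ)) * (m * (γ * M) * αmax ^ 2) :=
      mul_le_mul_of_nonneg_left hcb hcpos.le
    have h2 : (1 / (2 * γ)) * (m * (γ * M) * αmax ^ 2) = (m * M * αmax ^ 2) / 2 := by
      field_simp
    have h3 : -C ≤ |C| := neg_le_abs _
    have h4 : 0 ≤ m * M * αmax ^ 2 := by positivity
    nlinarith [mul_le_mul_of_nonneg_left h3 hcpos.le]
  rw [key]
  linarith
end

section
/- Consider n = m = 2, f₁(x) = (x₁ − 1)², f₂(x) = x₂², the mixing matrix W = (1/2)·[[1,1],[1,1]], and the direction d = (1,1)ᵀ. Let {β_k}_{k∈ℕ} be any sequence of positive reals with β_k → 0, and define x₁^{(k)} := (β_k, 1 + β_k)ᵀ and x₂^{(k)} := (−β_k, 1 − β_k)ᵀ. Then: (i) these iterates satisfy the consensus-plus-step recursion x₁^{(k+1)} = (1/2)(x₁^{(k)} + x₂^{(k)}) + β_{k+1} d and x₂^{(k+1)} = (1/2)(x₁^{(k)} + x₂^{(k)}) − β_{k+1} d; (ii)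 the average iterate (1/2)(x₁^{(k)} + x₂^{(k)}) equals (0,1)ᵀ for every k; (iii) both sequences converge to (0,1)ᵀ, so ‖x₁^{(k)} − x₂^{(k)}‖ → 0 (consensus is reached); and (iv) the common limit (0,1)ᵀ is not a stationary point of f₁ + f₂, since ∇(f₁+f₂)(0,1) = (−2, 2)ᵀ ≠ 0. -/
open Filter

/-!
The iterates are the symmetric perturbations `c ± β_k d` of `c = (0, 1)`, so their mean is `c` at
every step; this makes the recursion an identity and sends both agents to `c` as `β_k → 0`. On the
other hand `f₁ + f₂ = ‖· - (1, 0)‖²`, whose gradient at `c` is `2 (c - (1, 0)) = (-2, 2)`.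
-/

section SymmetricPerturbation

variable {E : Type*} [AddCommGroup E] [Module ℝ E]

theorem half_smul_add_add_sub_smul (c d : E) (t : ℝ) :
    (1 / 2 : ℝ) • ((c + t • d) + (c - t • d)) = c := by
  rw [add_add_sub_cancel, ← two_smul ℝ c, smul_smul]
  norm_num

variable [TopologicalSpace E] [IsTopologicalAddGroup E] [ContinuousSMul ℝ E]
  {ι : Type*} {l : Filter ι} {β : ι → ℝ}

theorem tendsto_add_smul_of_tendsto_zero (hβ : Tendsto β l (nhds 0)) (c d : E) :
    Tendsto (fun k => c + β k • d) l (nhds c) := by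
  simpa using tendsto_const_nhds.add (hβ.smul_const d)

theorem tendsto_sub_smul_of_tendsto_zero (hβ : Tendsto β l (nhds 0)) (c d : E) :
    Tendsto (fun k => c - β k • d) l (nhds c) := by
  simpa using tendsto_const_nhds.sub (hβ.smul_const d)

end SymmetricPerturbation

theorem hasGradientAt_norm_sub_sq {F : Type*} [NormedAddCommGroup F] [InnerProductSpace ℝ F]
    [CompleteSpace F] (a x : F) :
    HasGradientAt (fun y => ‖y - a‖ ^ 2) ((2 : ℝ) • (x - a)) x := by
  rw [hasGradientAt_iff_hasFDerivAt]
  refine ((hasFDerivAt_id x).sub_const a).norm_sq.congr_fderiv ?_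
  ext v
  simp

theorem ddsF_consensus_without_optimality_general
    (f₁ f₂ : EuclideanSpace ℝ (Fin 2) → ℝ)
    (hf₁ : f₁ = fun x => (x 0 - 1) ^ 2) (hf₂ : f₂ = fun x => (x 1) ^ 2)
    (β : ℕ → ℝ) (hβ : Tendsto β atTop (nhds 0))
    (x₁ x₂ : ℕ → EuclideanSpace ℝ (Fin 2))
    (hx₁ : ∀ k, x₁ k = (WithLp.equiv 2 (Fin 2 → ℝ)).symm ![β k, 1 + β k])
    (hx₂ : ∀ k, x₂ k = (WithLp.equiv 2 (Fin 2 → ℝ)).symm ![-β k, 1 - β k]) :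
    -- (i) the consensus-plus-step recursion of DDS-F with mixing matrix (1/2)[[1,1],[1,1]]
    (∀ k, x₁ (k + 1)
        = (1 / 2 : ℝ) • (x₁ k + x₂ k)
          + β (k + 1) • (WithLp.equiv 2 (Fin 2 → ℝ)).symm ![1, 1] ∧
      x₂ (k + 1)
        = (1 / 2 : ℝ) • (x₁ k + x₂ k)
          - β (k + 1) • (WithLp.equiv 2 (Fin 2 → ℝ)).symm ![1, 1]) ∧
    -- (ii) the average iterate is constant, equal to (0, 1)ᵀ
    (∀ k, (1 / 2 : ℝ) • (x₁ k + x₂ k) = (WithLp.equiv 2 (Fin 2 → ℝ)).symm ![0, 1]) ∧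
    -- (iii) convergence of both agents to (0, 1)ᵀ and asymptotic consensus
    (Tendsto x₁ atTop (nhds ((WithLp.equiv 2 (Fin 2 → ℝ)).symm ![0, 1])) ∧
      Tendsto x₂ atTop (nhds ((WithLp.equiv 2 (Fin 2 → ℝ)).symm ![0, 1])) ∧
      Tendsto (fun k => ‖x₁ k - x₂ k‖) atTop (nhds 0)) ∧
    -- (iv) the common limit is not a stationary point of f₁ + f₂
    (gradient (fun x => f₁ x + f₂ x) ((WithLp.equiv 2 (Fin 2 → ℝ)).symm ![0, 1])
        = (WithLp.equiv 2 (Fin 2 → ℝ)).symm ![-2, 2] ∧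
      (WithLp.equiv 2 (Fin 2 → ℝ)).symm ![(-2 : ℝ), 2] ≠ 0) := by
  set c := (WithLp.equiv 2 (Fin 2 → ℝ)).symm ![(0 : ℝ), 1]
  set d := (WithLp.equiv 2 (Fin 2 → ℝ)).symm ![(1 : ℝ), 1]
  have hx₁' (k : ℕ) : x₁ k = c + β k • d := by
    rw [hx₁]; ext i; fin_cases i <;> simp [c, d]
  have hx₂' (k : ℕ) : x₂ k = c - β k • d := by
    rw [hx₂]; ext i; fin_cases i <;> simp [c, d]
  have hmean (k : ℕ) : (1 / 2 : ℝ) • (x₁ k + x₂ k) = c := by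
    rw [hx₁', hx₂', half_smul_add_add_sub_smul]
  have h₁ : Tendsto x₁ atTop (nhds c) := by
    simpa only [← hx₁'] using tendsto_add_smul_of_tendsto_zero hβ c d
  have h₂ : Tendsto x₂ atTop (nhds c) := by
    simpa only [← hx₂'] using tendsto_sub_smul_of_tendsto_zero hβ c d
  have hsum : (fun x => f₁ x + f₂ x) =
      fun x => ‖x - (WithLp.equiv 2 (Fin 2 → ℝ)).symm ![1, 0]‖ ^ 2 := by
    ext x; simp [hf₁, hf₂, EuclideanSpace.real_norm_sq_eq, Fin.sum_univ_two]
  refine ⟨fun k => ⟨?_, ?_⟩, hmean, ⟨h₁, h₂, by simpa using (h₁.sub h₂).norm⟩, ?_, ?_⟩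
  · rw [hmean, hx₁']
  · rw [hmean, hx₂']
  · rw [hsum, (hasGradientAt_norm_sub_sq _ c).gradient]
    ext i; fin_cases i <;> norm_num [c]
  · intro h
    simpa using congrArg (· 0) h

/-- the two-agent counterexample for `DDS-F`. With `f₁(x) = (x₁ - 1)²`,
`f₂(x) = x₂²`, `W = (1/2)[[1,1],[1,1]]`, `d = (1,1)ᵀ`, positive `β_k → 0`, and iterates
`x₁^{(k)} = (β_k, 1 + β_k)ᵀ`, `x₂^{(k)} = (-β_k, 1 - β_k)ᵀ`: (i) the iterates satisfy the
consensus-plus-step recursion; (ii) the average iterate is constantly `(0,1)ᵀ`;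
(iii) both sequences converge to `(0,1)ᵀ` and consensus is reached; (iv) the common
limit `(0,1)ᵀ` is not stationary for `f₁ + f₂`, since `∇(f₁+f₂)(0,1) = (-2,2)ᵀ ≠ 0`. -/
theorem ddsF_consensus_without_optimality
    (f₁ f₂ : EuclideanSpace ℝ (Fin 2) → ℝ)
    (hf₁ : f₁ = fun x => (x 0 - 1) ^ 2) (hf₂ : f₂ = fun x => (x 1) ^ 2)
    (β : ℕ → ℝ) (hβpos : ∀ k, 0 < β k) (hβ : Tendsto β atTop (nhds 0))
    (x₁ x₂ : ℕ → EuclideanSpace ℝ (Fin 2))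
    (hx₁ : ∀ k, x₁ k = (WithLp.equiv 2 (Fin 2 → ℝ)).symm ![β k, 1 + β k])
    (hx₂ : ∀ k, x₂ k = (WithLp.equiv 2 (Fin 2 → ℝ)).symm ![-β k, 1 - β k]) :
    -- (i) the consensus-plus-step recursion of DDS-F with mixing matrix (1/2)[[1,1],[1,1]]
    (∀ k, x₁ (k + 1)
        = (1 / 2 : ℝ) • (x₁ k + x₂ k)
          + β (k + 1) • (WithLp.equiv 2 (Fin 2 → ℝ)).symm ![1, 1] ∧
      x₂ (k + 1)
        = (1 / 2 : ℝ) • (x₁ k + x₂ k)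
          - β (k + 1) • (WithLp.equiv 2 (Fin 2 → ℝ)).symm ![1, 1]) ∧
    -- (ii) the average iterate is constant, equal to (0, 1)ᵀ
    (∀ k, (1 / 2 : ℝ) • (x₁ k + x₂ k) = (WithLp.equiv 2 (Fin 2 → ℝ)).symm ![0, 1]) ∧
    -- (iii) convergence of both agents to (0, 1)ᵀ and asymptotic consensus
    (Tendsto x₁ atTop (nhds ((WithLp.equiv 2 (Fin 2 → ℝ)).symm ![0, 1])) ∧
      Tendsto x₂ atTop (nhds ((WithLp.equiv 2 (Fin 2 → ℝ)).symm ![0, 1])) ∧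
      Tendsto (fun k => ‖x₁ k - x₂ k‖) atTop (nhds 0)) ∧
    -- (iv) the common limit is not a stationary point of f₁ + f₂
    (gradient (fun x => f₁ x + f₂ x) ((WithLp.equiv 2 (Fin 2 → ℝ)).symm ![0, 1])
        = (WithLp.equiv 2 (Fin 2 → ℝ)).symm ![-2, 2] ∧
      (WithLp.equiv 2 (Fin 2 → ℝ)).symm ![(-2 : ℝ), 2] ≠ 0) :=
  ddsF_consensus_without_optimality_general f₁ f₂ hf₁ hf₂ β hβ x₁ x₂ hx₁ hx₂
end
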